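/- For the maximally obese state ρ_mo = (1 − b/2)|Ψ_b⟩⟨Ψ_b| + (b/2)|00⟩⟨00| with |Ψ_b⟩ = (√(1−b)|01⟩ + |10⟩)/√(2−b) and 0 < b < 1, Alice's marginal is maximally mixed, Bob's Bloch vector is (0,0,b), the correlation matrix has singular values √(1−b), √(1−b), 1−b, and the maximal steered coherence equals √(1−b), which is strictly less than the canonical bound √(1−b²). -/
import Mathlib


open Matrix BigOperators Kronecker ComplexOrder

set_option maxHeartbeats 1600000
noncomputable section

def pauli : Fin 3 → Matrix (Fin 2) (Fin 2) ℂ :=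
  ![!![0, 1; 1, 0], !![0, -Complex.I; Complex.I, 0], !![1, 0; 0, -1]]

def cross3 (u v : Fin 3 → ℝ) : Fin 3 → ℝ :=
  ![u 1 * v 2 - u 2 * v 1, u 2 * v 0 - u 0 * v 2, u 0 * v 1 - u 1 * v 0]

def norm3 (v : Fin 3 → ℝ) : ℝ := Real.sqrt (∑ i, v i ^ 2)

def proj {n : Type*} [Fintype n] (x : n → ℂ) : Matrix n n ℂ :=
  vecMulVec x (star x)

/-- |Ψ_b⟩ = (√(1−b)|01⟩ + |10⟩)/√(2−b). -/
def Ψb (b : ℝ) : Fin 2 × Fin 2 → ℂ := fun x =>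
  if x = (0, 1) then (Real.sqrt (1 - b) / Real.sqrt (2 - b) : ℂ)
  else if x = (1, 0) then ((Real.sqrt (2 - b))⁻¹ : ℂ) else 0

/-- |00⟩. -/
def e00 : Fin 2 × Fin 2 → ℂ := fun x => if x = (0, 0) then 1 else 0

/-- for the maximally obese state, Alice's marginal is maximally
mixed, Bob's Bloch vector is (0,0,b), T has singular values √(1−b), √(1−b), 1−b,
and the maximal steered coherence equals √(1−b) < √(1−b²). -/
theorem stmt14 (b : ℝ) (hb0 : 0 < b) (hb1 : b < 1)
    (ρmo : Matrix (Fin 2 × Fin 2) (Fin 2 × Fin 2) ℂ)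
    (hρmo : ρmo = ((1 - b / 2 : ℝ) : ℂ) • proj (Ψb b) + ((b / 2 : ℝ) : ℂ) • proj e00)
    (a bv : Fin 3 → ℝ) (T : Matrix (Fin 3) (Fin 3) ℝ)
    (ha : ∀ i, a i = ((ρmo * (pauli i ⊗ₖ 1)).trace).re)
    (hbv : ∀ j, bv j = ((ρmo * ((1 : Matrix (Fin 2) (Fin 2) ℂ) ⊗ₖ pauli j)).trace).re)
    (hT : ∀ i j, T i j = ((ρmo * (pauli i ⊗ₖ pauli j)).trace).re) :
    (∀ i, a i = 0) ∧
    bv = ![0, 0, b] ∧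
    T * Tᵀ = Matrix.diagonal ![1 - b, 1 - b, (1 - b) ^ 2] ∧
    IsGreatest {c | ∃ m : Fin 3 → ℝ, norm3 m = 1 ∧
        c = norm3 (cross3 (fun j => ∑ i, T i j * m i) ![0, 0, 1])}
      (Real.sqrt (1 - b)) ∧
    Real.sqrt (1 - b) < Real.sqrt (1 - b ^ 2) := by
  have ht : Real.sqrt (2-b) ^ 2 = 2 - b := Real.sq_sqrt (by linarith)
  have hs : Real.sqrt (1-b) ^ 2 = 1 - b := Real.sq_sqrt (by linarith)
  have hs0 : 0 ≤ Real.sqrt (1-b) := Real.sqrt_nonneg _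
  have ht0 : Real.sqrt (2-b) ≠ 0 := Real.sqrt_ne_zero'.mpr (by linarith)
  have ht3 : Real.sqrt (2-b) ^ 3 = Real.sqrt (2-b) * (2-b) := by rw [pow_succ, ht]; ring
  have hs3 : Real.sqrt (1-b) ^ 3 = Real.sqrt (1-b) * (1-b) := by rw [pow_succ, hs]; ring
  have ht4 : Real.sqrt (2-b) ^ 4 = (2-b)^2 := by rw [show (4:ℕ)=2*2 from rfl, pow_mul, ht]
  have hs4 : Real.sqrt (1-b) ^ 4 = (1-b)^2 := by rw [show (4:ℕ)=2*2 from rfl, pow_mul, hs]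
  have hss : Real.sqrt (1-b) * Real.sqrt (1-b) = 1-b := Real.mul_self_sqrt (by linarith)
  have hts : Real.sqrt (2-b) * Real.sqrt (2-b) = 2-b := Real.mul_self_sqrt (by linarith)
  have hTv : T = Matrix.of ![![Real.sqrt (1-b),0,0],![0,Real.sqrt (1-b),0],![0,0,b-1]] := by
    ext i j
    fin_cases i <;> fin_cases j <;>
    (simp only [hT, hρmo]
     simp [Matrix.trace, Matrix.mul_apply, Matrix.diag, pauli, proj, Ψb, e00,
      Fintype.sum_prod_type, Fin.sum_univ_two, vecMulVec_apply, kroneckerMap_apply,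
      Matrix.vecHead, Matrix.vecTail]
     try field_simp
     try (ring_nf; simp only [hs, ht, hs3, ht3, hs4, ht4, hss, hts]; ring))
  refine ⟨?_, ?_, ?_, ?_, ?_⟩
  · intro i
    fin_cases i <;>
    (simp only [ha, hρmo]
     simp [Matrix.trace, Matrix.mul_apply, Matrix.diag, pauli, proj, Ψb, e00,
      Fintype.sum_prod_type, Fin.sum_univ_two, vecMulVec_apply, kroneckerMap_apply,
      Matrix.vecHead, Matrix.vecTail]
     try field_simp
     try (ring_nf; simp only [hs, ht, hs3, ht3, hs4, ht4, hss, hts]; ring))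
  · funext j
    fin_cases j <;>
    (simp only [hbv, hρmo]
     simp [Matrix.trace, Matrix.mul_apply, Matrix.diag, pauli, proj, Ψb, e00,
      Fintype.sum_prod_type, Fin.sum_univ_two, vecMulVec_apply, kroneckerMap_apply,
      Matrix.vecHead, Matrix.vecTail]
     try field_simp
     try (ring_nf; simp only [hs, ht, hs3, ht3, hs4, ht4, hss, hts]; ring))
  · subst hTv
    ext i j
    fin_cases i <;> fin_cases j <;>
      simp [Matrix.mul_apply, Matrix.transpose_apply, Matrix.diagonal, Fin.sum_univ_three,
        Matrix.vecHead, Matrix.vecTail] <;>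
      ring_nf <;> simp only [hs, ht, hs3, ht3, hs4, ht4, hss, hts] <;> ring
  · constructor
    · refine ⟨![1,0,0], ?_, ?_⟩
      · simp [norm3, Fin.sum_univ_three]
      · subst hTv
        simp [norm3, cross3, Fin.sum_univ_three, Matrix.vecHead, Matrix.vecTail]
        try rw [show Real.sqrt (1-b) * Real.sqrt (1-b) = Real.sqrt (1-b)^2 by ring, hs]
    · rintro c ⟨m, hm, rfl⟩
      subst hTv
      have hm' : m 0 ^ 2 + m 1 ^ 2 + m 2 ^ 2 = 1 := by
        have := congrArg (· ^ 2) hm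
        simpa [norm3, Fin.sum_univ_three,
          Real.sq_sqrt (by positivity : (0:ℝ) ≤ m 0 ^ 2 + m 1 ^ 2 + m 2 ^ 2)] using this
      have key : (Real.sqrt (1-b) * m 1) ^ 2 + (Real.sqrt (1-b) * m 0) ^ 2 ≤ (1 - b) := by
        have h01 : m 0 ^ 2 + m 1 ^ 2 ≤ 1 := by nlinarith [sq_nonneg (m 2)]
        calc (Real.sqrt (1-b) * m 1) ^ 2 + (Real.sqrt (1-b) * m 0) ^ 2
            = (1-b) * (m 0 ^ 2 + m 1 ^ 2) := by rw [mul_pow, mul_pow, hs]; ring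
          _ ≤ (1-b) * 1 := by
              apply mul_le_mul_of_nonneg_left h01 (by linarith)
          _ = 1 - b := by ring
      have : norm3 (cross3 (fun j => ∑ i,
          Matrix.of ![![Real.sqrt (1-b),0,0],![0,Real.sqrt (1-b),0],![0,0,b-1]] i j * m i)
          ![0, 0, 1]) = Real.sqrt ((Real.sqrt (1-b) * m 1) ^ 2 + (Real.sqrt (1-b) * m 0) ^ 2) := by
        simp [norm3, cross3, Fin.sum_univ_three, Matrix.vecHead, Matrix.vecTail]
        try ring_nf
      rw [this]
      exact Real.sqrt_le_sqrt key
  · apply Real.sqrt_lt_sqrt (by linarith)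
    nlinarith
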